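/- The edge of the wedge W₀ lies inside W_R: fix s > 0 and set c := √(1+s²), f₊ := (1, c, 0, …, 0, s), f₋ := (−1, c, 0, …, 0, s). For every σ = (σ₂, …, σ_{n−1}) ∈ ℝ^{n−2} (for n = 2 there is no σ-component), the point x_σ := (0, s·√(1+|σ|²), σ₂, …, σ_{n−1}, c·√(1+|σ|²)) satisfies: x_σ ∈ AdS (i.e. x_σ·x_σ = 1), f₊·x_σ = 0 and f₋·x_σ = 0 (x_σ lies on the edge of W₀), and x_σ ∈ W_R. -/

import Mathlib

open Matrix NormedSpace

/-- The diagonal entries of the metric `g = diag(1, −1, …, −1, 1)` on `ℝ^{n+1}`. -/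
def eta (n : ℕ) (i : Fin (n + 1)) : ℝ := if i = 0 ∨ i = Fin.last n then 1 else -1

/-- The ambient bilinear form `x·y = x₀y₀ − x₁y₁ − ⋯ − x_{n−1}y_{n−1} + x_ny_n`. -/
def mdot (n : ℕ) (x y : Fin (n + 1) → ℝ) : ℝ := ∑ i, eta n i * x i * y i

/-- Anti–de Sitter space: the quadric `{x ∈ ℝ^{n+1} : x·x = 1}`. -/
def AdS (n : ℕ) : Set (Fin (n + 1) → ℝ) := {x | mdot n x x = 1}

/-- The right wedge `W_R = {x ∈ AdS : x₁ > |x₀|, xₙ > 0}`. -/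
def WR (n : ℕ) : Set (Fin (n + 1) → ℝ) :=
  {x | x ∈ AdS n ∧ |x 0| < x 1 ∧ 0 < x (Fin.last n)}

/-- The opposite wedge `W_R′ = {x ∈ AdS : −x₁ > |x₀|, xₙ > 0}`. -/
def WRp (n : ℕ) : Set (Fin (n + 1) → ℝ) :=
  {x | x ∈ AdS n ∧ |x 0| < -x 1 ∧ 0 < x (Fin.last n)}

/-- The conjugate wedge `W̃_R = {x ∈ AdS : −x₁ > |x₀|, xₙ < 0}`. -/
def WtR (n : ℕ) : Set (Fin (n + 1) → ℝ) :=
  {x | x ∈ AdS n ∧ |x 0| < -x 1 ∧ x (Fin.last n) < 0}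

/-- The conjugate opposite wedge `W̃_R′ = {x ∈ AdS : x₁ > |x₀|, xₙ < 0}`. -/
def WtRp (n : ℕ) : Set (Fin (n + 1) → ℝ) :=
  {x | x ∈ AdS n ∧ |x 0| < x 1 ∧ x (Fin.last n) < 0}

/-- The matrix unit `E_{μν}`. -/
noncomputable def E (n : ℕ) (μ ν : Fin (n + 1)) : Matrix (Fin (n + 1)) (Fin (n + 1)) ℝ :=
  Matrix.single μ ν 1

/-- `K₀₁ = E₀₁ + E₁₀`, generator of the boost in the 0–1–plane. -/
noncomputable def K01 (n : ℕ) : Matrix (Fin (n + 1)) (Fin (n + 1)) ℝ := E n 0 1 + E n 1 0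

/-- The metric matrix `g = diag(1, −1, …, −1, 1)`. -/
noncomputable def gMat (n : ℕ) : Matrix (Fin (n + 1)) (Fin (n + 1)) ℝ :=
  Matrix.diagonal (eta n)

/-- The lightlike vector `f₊ = (1, c, 0, …, 0, s)` (with `c = √(1+s²)`). -/
noncomputable def fplus (n : ℕ) (s : ℝ) : Fin (n + 1) → ℝ := fun i =>
  if i = 0 then 1 else if i = 1 then Real.sqrt (1 + s ^ 2)
  else if i = Fin.last n then s else 0

/-- The lightlike vector `f₋ = (−1, c, 0, …, 0, s)` (with `c = √(1+s²)`). -/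
noncomputable def fminus (n : ℕ) (s : ℝ) : Fin (n + 1) → ℝ := fun i =>
  if i = 0 then -1 else if i = 1 then Real.sqrt (1 + s ^ 2)
  else if i = Fin.last n then s else 0

/-- The wedge `W₀ = {x ∈ AdS : f₊·x < 0, f₋·x < 0, xₙ > 0}`. -/
noncomputable def W0 (n : ℕ) (s : ℝ) : Set (Fin (n + 1) → ℝ) :=
  {x | x ∈ AdS n ∧ mdot n (fplus n s) x < 0 ∧ mdot n (fminus n s) x < 0 ∧
    0 < x (Fin.last n)}

/-- `|σ|²` for a vector `σ` of middle components (indices `2, …, n−1`). -/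
noncomputable def sigmaNormSq (n : ℕ) (σ : Fin (n + 1) → ℝ) : ℝ :=
  ∑ i ∈ Finset.univ.filter (fun i : Fin (n + 1) => ¬(i = 0 ∨ i = 1 ∨ i = Fin.last n)),
    σ i ^ 2

/-- The edge point `x_σ = (0, s√(1+|σ|²), σ₂, …, σ_{n−1}, c√(1+|σ|²))`. -/
noncomputable def edgePoint (n : ℕ) (s : ℝ) (σ : Fin (n + 1) → ℝ) : Fin (n + 1) → ℝ :=
  fun i =>
    if i = 0 then 0
    else if i = 1 then s * Real.sqrt (1 + sigmaNormSq n σ)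
    else if i = Fin.last n then Real.sqrt (1 + s ^ 2) * Real.sqrt (1 + sigmaNormSq n σ)
    else σ i

/-! Write `r = √(1+|σ|²)` and `c = √(1+s²)`. Since `x_σ` has vanishing time component and
`f₊`, `f₋` vanish in the middle components, `f_± · x_σ = −c·(s r) + s·(c r) = 0`, while
`x_σ · x_σ = r² (c² − s²) − |σ|² = (1 + |σ|²) − |σ|² = 1` because `c² − s² = 1`. The
remaining `W_R` conditions are the positivity of `s r` and `c r`. -/

open Finset

def middleIdx (n : ℕ) : Finset (Fin (n + 1)) :=
  univ.filter fun i => ¬(i = 0 ∨ i = 1 ∨ i = Fin.last n)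

lemma mem_middleIdx {n : ℕ} {i : Fin (n + 1)} :
    i ∈ middleIdx n ↔ i ≠ 0 ∧ i ≠ 1 ∧ i ≠ Fin.last n := by
  simp [middleIdx]

lemma sigmaNormSq_nonneg (n : ℕ) (σ : Fin (n + 1) → ℝ) : 0 ≤ sigmaNormSq n σ :=
  sum_nonneg fun _ _ => sq_nonneg _

section

variable {n : ℕ} {s : ℝ} {σ : Fin (n + 1) → ℝ}

lemma zero_ne_one_of_two_le (hn : 2 ≤ n) : (0 : Fin (n + 1)) ≠ 1 :=
  Fin.ne_of_val_ne (by rw [Fin.val_one', Nat.mod_eq_of_lt (by omega)]; simp)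

lemma last_ne_zero_of_two_le (hn : 2 ≤ n) : Fin.last n ≠ 0 :=
  Fin.ne_of_val_ne (by simp; omega)

lemma last_ne_one_of_two_le (hn : 2 ≤ n) : Fin.last n ≠ 1 :=
  Fin.ne_of_val_ne (by rw [Fin.val_one', Nat.mod_eq_of_lt (by omega)]; simp; omega)

lemma mdot_eq_of_two_le (hn : 2 ≤ n) (x y : Fin (n + 1) → ℝ) :
    mdot n x y = x 0 * y 0 - x 1 * y 1 + x (Fin.last n) * y (Fin.last n)
      - ∑ i ∈ middleIdx n, x i * y i := by
  have h01 := zero_ne_one_of_two_le hn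
  have hl0 := last_ne_zero_of_two_le hn
  have hl1 := last_ne_one_of_two_le hn
  have hends : univ.filter (fun i : Fin (n + 1) => i = 0 ∨ i = 1 ∨ i = Fin.last n)
      = {0, 1, Fin.last n} := by
    ext i; simp
  have hmiddle : ∑ i ∈ middleIdx n, eta n i * x i * y i = -∑ i ∈ middleIdx n, x i * y i := by
    rw [← sum_neg_distrib]
    refine sum_congr rfl fun i hi => ?_
    obtain ⟨hi0, -, hil⟩ := mem_middleIdx.1 hi
    simp [eta, hi0, hil]
  rw [mdot, ← sum_filter_add_sum_filter_not univ
    (fun i : Fin (n + 1) => i = 0 ∨ i = 1 ∨ i = Fin.last n), ← middleIdx, hmiddle, hends,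
    sum_insert (by simp [h01, hl0.symm]), sum_insert (by simp [hl1.symm]), sum_singleton]
  simp only [eta, Fin.zero_eq_last_iff, true_or, ↓reduceIte, one_mul, h01.symm, hl1.symm,
    or_self, neg_mul, Fin.last_eq_zero_iff, or_true]
  ring

lemma edgePoint_zero : edgePoint n s σ 0 = 0 := by
  simp [edgePoint]

lemma edgePoint_one (hn : 2 ≤ n) :
    edgePoint n s σ 1 = s * Real.sqrt (1 + sigmaNormSq n σ) := by
  simp [edgePoint, (zero_ne_one_of_two_le hn).symm]

lemma edgePoint_last (hn : 2 ≤ n) :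
    edgePoint n s σ (Fin.last n) =
      Real.sqrt (1 + s ^ 2) * Real.sqrt (1 + sigmaNormSq n σ) := by
  simp [edgePoint, last_ne_zero_of_two_le hn, last_ne_one_of_two_le hn]

lemma edgePoint_of_mem_middleIdx {i : Fin (n + 1)} (hi : i ∈ middleIdx n) :
    edgePoint n s σ i = σ i := by
  obtain ⟨hi0, hi1, hil⟩ := mem_middleIdx.1 hi
  simp [edgePoint, hi0, hi1, hil]

lemma edgePoint_mem_AdS (hn : 2 ≤ n) : edgePoint n s σ ∈ AdS n := by
  have hmiddle : ∑ i ∈ middleIdx n, edgePoint n s σ i * edgePoint n s σ i = sigmaNormSq n σ :=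
    sum_congr rfl fun i hi => by rw [edgePoint_of_mem_middleIdx hi, sq]
  have hc : Real.sqrt (1 + s ^ 2) ^ 2 = 1 + s ^ 2 := Real.sq_sqrt (by positivity)
  have hr : Real.sqrt (1 + sigmaNormSq n σ) ^ 2 = 1 + sigmaNormSq n σ :=
    Real.sq_sqrt (by linarith [sigmaNormSq_nonneg n σ])
  show mdot n _ _ = 1
  rw [mdot_eq_of_two_le hn, hmiddle, edgePoint_zero, edgePoint_one hn, edgePoint_last hn]
  linear_combination Real.sqrt (1 + sigmaNormSq n σ) ^ 2 * hc + hr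

lemma mdot_edgePoint_eq_zero (hn : 2 ≤ n) {f : Fin (n + 1) → ℝ}
    (hf₁ : f 1 = Real.sqrt (1 + s ^ 2)) (hfₙ : f (Fin.last n) = s)
    (hf : ∀ i ∈ middleIdx n, f i = 0) : mdot n f (edgePoint n s σ) = 0 := by
  have hmiddle : ∑ i ∈ middleIdx n, f i * edgePoint n s σ i = 0 :=
    sum_eq_zero fun i hi => by rw [hf i hi, zero_mul]
  rw [mdot_eq_of_two_le hn, hmiddle, edgePoint_zero, edgePoint_one hn, edgePoint_last hn,
    hf₁, hfₙ]
  ring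

lemma mdot_fplus_edgePoint (hn : 2 ≤ n) : mdot n (fplus n s) (edgePoint n s σ) = 0 :=
  mdot_edgePoint_eq_zero hn
    (by simp [fplus, (zero_ne_one_of_two_le hn).symm])
    (by simp [fplus, last_ne_zero_of_two_le hn, last_ne_one_of_two_le hn])
    fun i hi => by
      obtain ⟨hi0, hi1, hil⟩ := mem_middleIdx.1 hi
      simp [fplus, hi0, hi1, hil]

lemma mdot_fminus_edgePoint (hn : 2 ≤ n) : mdot n (fminus n s) (edgePoint n s σ) = 0 :=
  mdot_edgePoint_eq_zero hn
    (by simp [fminus, (zero_ne_one_of_two_le hn).symm])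
    (by simp [fminus, last_ne_zero_of_two_le hn, last_ne_one_of_two_le hn])
    fun i hi => by
      obtain ⟨hi0, hi1, hil⟩ := mem_middleIdx.1 hi
      simp [fminus, hi0, hi1, hil]

lemma edgePoint_mem_WR (hn : 2 ≤ n) (hs : 0 < s) : edgePoint n s σ ∈ WR n := by
  have hr : 0 < Real.sqrt (1 + sigmaNormSq n σ) :=
    Real.sqrt_pos.2 (by linarith [sigmaNormSq_nonneg n σ])
  have hc : 0 < Real.sqrt (1 + s ^ 2) := Real.sqrt_pos.2 (by positivity)
  refine ⟨edgePoint_mem_AdS hn, ?_, ?_⟩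
  · rw [edgePoint_zero, edgePoint_one hn, abs_zero]
    exact mul_pos hs hr
  · rw [edgePoint_last hn]
    exact mul_pos hc hr

end

/-- The edge of the wedge `W₀` lies inside `W_R`: for every choice of middle components
`σ ∈ ℝ^{n−2}`, the point `x_σ` lies on AdS, is orthogonal to both lightlike vectors
`f₊, f₋` (so it lies on the edge of `W₀`), and belongs to `W_R`. -/
theorem edge_of_W0_in_WR (n : ℕ) (hn : 2 ≤ n) (s : ℝ) (hs : 0 < s)
    (σ : Fin (n + 1) → ℝ) :
    edgePoint n s σ ∈ AdS n ∧
    mdot n (fplus n s) (edgePoint n s σ) = 0 ∧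
    mdot n (fminus n s) (edgePoint n s σ) = 0 ∧
    edgePoint n s σ ∈ WR n :=
  ⟨edgePoint_mem_AdS hn, mdot_fplus_edgePoint hn, mdot_fminus_edgePoint hn,
    edgePoint_mem_WR hn hs⟩
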